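/- Let δ ∈ (0,1] and let u : P₂(ℝ) → ℝ satisfy |u(μ)| ≤ 1 for every μ ∈ P₂(ℝ) and |u(μ) − u(ν)| ≤ d_TV(μ,ν)^δ for all μ, ν ∈ P₂(ℝ). Then there exists a constant C > 0 depending only on δ such that for every ε > 0 there exists a function u^ε : P₂(ℝ) → ℝ with the following three properties: (a) |u^ε(μ) − u(μ)| ≤ C·ε^{δ/(2−δ)} for every μ ∈ P₂(ℝ); (b) |u^ε(μ) − u^ε(ν)| ≤ C·ε^{(δ−1)/(2−δ)}·d_TV(μ,ν) for all μ, ν ∈ P₂(ℝ); (c) |u^ε(μ) − u^ε(ν)| ≤ C·d_TV(μ,ν)^δ for all μ, ν ∈ P₂(ℝ). -/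

import Mathlib

/-!
Regularise `u` by the inf-convolution `v x = inf_y (u y + λ d(x, y))` with
`λ = t^(δ-1)`, `t = ε^(1/(2-δ))`. It is `λ`-Lipschitz for any pseudometric `d`, and the
Young-type bound `s^δ ≤ λ s + t^δ` turns the `δ`-Hölder bound on `u` into `u - t^δ ≤ v ≤ u`.
Hölder continuity of `v` follows from the Lipschitz bound at distances `≤ t`, and from
`|v - u| ≤ t^δ` at larger distances.
-/

open MeasureTheory

/-- Borel probability measures on ℝ with finite second moment. -/
def P2 : Type := {μ : Measure ℝ // IsProbabilityMeasure μ ∧ Integrable (fun x => x ^ 2) μ}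

/-- Total variation distance `d_TV(μ,ν) = 2 sup_A |μ(A) − ν(A)|`. -/
noncomputable def dTV (μ ν : Measure ℝ) : ℝ :=
  2 * ⨆ A : {A : Set ℝ // MeasurableSet A}, |(μ A.1).toReal - (ν A.1).toReal|

open Set

lemma bddAbove_range_abs_measure_sub (μ ν : Measure ℝ) [IsFiniteMeasure μ] [IsFiniteMeasure ν] :
    BddAbove (range fun A : {A : Set ℝ // MeasurableSet A} =>
      |(μ A.1).toReal - (ν A.1).toReal|) := by
  refine ⟨μ.real univ + ν.real univ, ?_⟩
  rintro _ ⟨A, rfl⟩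
  calc |(μ A.1).toReal - (ν A.1).toReal| ≤ |μ.real A.1| + |ν.real A.1| := abs_sub _ _
    _ = μ.real A.1 + ν.real A.1 := by simp only [abs_of_nonneg measureReal_nonneg]
    _ ≤ μ.real univ + ν.real univ :=
      add_le_add (measureReal_mono (subset_univ _)) (measureReal_mono (subset_univ _))

lemma dTV_self (μ : Measure ℝ) : dTV μ μ = 0 := by
  simp [dTV]

lemma dTV_comm (μ ν : Measure ℝ) : dTV μ ν = dTV ν μ := by
  simp only [dTV, abs_sub_comm]

lemma dTV_triangle (μ ν ρ : Measure ℝ) [IsFiniteMeasure μ] [IsFiniteMeasure ν]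
    [IsFiniteMeasure ρ] : dTV μ ρ ≤ dTV μ ν + dTV ν ρ := by
  rw [dTV, dTV, dTV, ← mul_add]
  gcongr
  have : Nonempty {A : Set ℝ // MeasurableSet A} := ⟨⟨∅, MeasurableSet.empty⟩⟩
  refine ciSup_le fun A => (abs_sub_le _ ((ν A.1).toReal) _).trans ?_
  exact add_le_add (le_ciSup (bddAbove_range_abs_measure_sub μ ν) A)
    (le_ciSup (bddAbove_range_abs_measure_sub ν ρ) A)

noncomputable instance : PseudoMetricSpace P2 where
  dist μ ν := dTV μ.1 ν.1
  dist_self μ := dTV_self μ.1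
  dist_comm μ ν := dTV_comm μ.1 ν.1
  dist_triangle μ ν ρ := by
    have := μ.2.1; have := ν.2.1; have := ρ.2.1
    exact dTV_triangle μ.1 ν.1 ρ.1

lemma P2.dist_eq (μ ν : P2) : dist μ ν = dTV μ.1 ν.1 := rfl

section InfConvolution

variable {X : Type*} [PseudoMetricSpace X]

noncomputable def infConv (u : X → ℝ) (L : ℝ) (x : X) : ℝ :=
  ⨅ y, u y + L * dist x y

variable {u : X → ℝ} {L c : ℝ}

lemma bddBelow_range_add_mul_dist (hu : ∀ x y, u x - u y ≤ L * dist x y + c) (x : X) :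
    BddBelow (range fun y => u y + L * dist x y) := by
  refine ⟨u x - c, ?_⟩
  rintro _ ⟨y, rfl⟩
  linarith [hu x y]

lemma infConv_le_self (hu : ∀ x y, u x - u y ≤ L * dist x y + c) (x : X) :
    infConv u L x ≤ u x := by
  simpa [infConv] using ciInf_le (bddBelow_range_add_mul_dist hu x) x

lemma sub_le_infConv (hu : ∀ x y, u x - u y ≤ L * dist x y + c) (x : X) :
    u x - c ≤ infConv u L x := by
  have : Nonempty X := ⟨x⟩
  exact le_ciInf fun y => by linarith [hu x y]

lemma abs_infConv_sub_self_le (hu : ∀ x y, u x - u y ≤ L * dist x y + c) (x : X) :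
    |infConv u L x - u x| ≤ c := by
  rw [abs_sub_le_iff]
  constructor <;> linarith [infConv_le_self hu x, sub_le_infConv hu x]

lemma infConv_sub_infConv_le (hu : ∀ x y, u x - u y ≤ L * dist x y + c) (hL : 0 ≤ L)
    (x y : X) : infConv u L x - infConv u L y ≤ L * dist x y := by
  have : Nonempty X := ⟨x⟩
  suffices infConv u L x - L * dist x y ≤ infConv u L y by linarith
  refine le_ciInf fun z => ?_
  have hx : infConv u L x ≤ u z + L * dist x z := ciInf_le (bddBelow_range_add_mul_dist hu x) z
  have := mul_le_mul_of_nonneg_left (dist_triangle x y z) hL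
  linarith

lemma abs_infConv_sub_infConv_le (hu : ∀ x y, u x - u y ≤ L * dist x y + c) (hL : 0 ≤ L)
    (x y : X) : |infConv u L x - infConv u L y| ≤ L * dist x y := by
  rw [abs_sub_le_iff]
  exact ⟨infConv_sub_infConv_le hu hL x y, dist_comm x y ▸ infConv_sub_infConv_le hu hL y x⟩

end InfConvolution

section Young

variable {δ s t : ℝ}

lemma Real.rpow_eq_rpow_sub_one_mul (hs : 0 < s) (δ : ℝ) : s ^ δ = s ^ (δ - 1) * s := by
  rw [Real.rpow_sub_one hs.ne', div_mul_cancel₀ _ hs.ne']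

lemma Real.rpow_le_rpow_sub_one_mul_add_rpow (hδ0 : 0 ≤ δ) (hδ1 : δ ≤ 1) (ht : 0 < t)
    (hs : 0 ≤ s) : s ^ δ ≤ t ^ (δ - 1) * s + t ^ δ := by
  rcases le_or_gt s t with hst | hts
  · have := Real.rpow_le_rpow hs hst hδ0
    nlinarith [Real.rpow_nonneg ht.le (δ - 1)]
  · have hs : 0 < s := ht.trans hts
    rw [Real.rpow_eq_rpow_sub_one_mul hs]
    have := Real.rpow_le_rpow_of_nonpos ht hts.le (by linarith : δ - 1 ≤ 0)
    nlinarith [Real.rpow_nonneg ht.le δ]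

lemma Real.rpow_sub_one_mul_le_rpow (hδ1 : δ ≤ 1) (hs : 0 ≤ s) (hst : s ≤ t) :
    t ^ (δ - 1) * s ≤ s ^ δ := by
  rcases hs.eq_or_lt with rfl | hs
  · simpa using Real.rpow_nonneg le_rfl δ
  · rw [Real.rpow_eq_rpow_sub_one_mul hs δ]
    exact mul_le_mul_of_nonneg_right
      (Real.rpow_le_rpow_of_nonpos hs hst (by linarith)) hs.le

end Young

theorem exists_lipschitz_approx_of_holder {X : Type*} [PseudoMetricSpace X] {δ : ℝ}
    (hδ0 : 0 ≤ δ) (hδ1 : δ ≤ 1) {u : X → ℝ} (hu : ∀ x y, |u x - u y| ≤ dist x y ^ δ)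
    {t : ℝ} (ht : 0 < t) :
    ∃ v : X → ℝ, (∀ x, |v x - u x| ≤ t ^ δ) ∧
      (∀ x y, |v x - v y| ≤ t ^ (δ - 1) * dist x y) ∧
      (∀ x y, |v x - v y| ≤ 3 * dist x y ^ δ) := by
  have hu' : ∀ x y, u x - u y ≤ t ^ (δ - 1) * dist x y + t ^ δ := fun x y =>
    (le_abs_self _).trans <| (hu x y).trans <|
      Real.rpow_le_rpow_sub_one_mul_add_rpow hδ0 hδ1 ht dist_nonneg
  have hL : 0 ≤ t ^ (δ - 1) := Real.rpow_nonneg ht.le _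
  refine ⟨infConv u (t ^ (δ - 1)), abs_infConv_sub_self_le hu',
    abs_infConv_sub_infConv_le hu' hL, fun x y => ?_⟩
  rcases le_or_gt (dist x y) t with hnear | hfar
  · calc _ ≤ t ^ (δ - 1) * dist x y := abs_infConv_sub_infConv_le hu' hL x y
      _ ≤ dist x y ^ δ := Real.rpow_sub_one_mul_le_rpow hδ1 dist_nonneg hnear
      _ ≤ 3 * dist x y ^ δ := by linarith [Real.rpow_nonneg (dist_nonneg (x := x) (y := y)) δ]
  · have htd : t ^ δ ≤ dist x y ^ δ := Real.rpow_le_rpow ht.le hfar.le hδ0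
    have hx := abs_infConv_sub_self_le hu' x
    have hy := abs_infConv_sub_self_le hu' y
    rw [abs_sub_comm] at hy
    have := abs_sub_le (infConv u (t ^ (δ - 1)) x) (u x) (infConv u (t ^ (δ - 1)) y)
    have := abs_sub_le (u x) (u y) (infConv u (t ^ (δ - 1)) y)
    linarith [hu x y]

theorem stmt1 (δ : ℝ) (hδ0 : 0 < δ) (hδ1 : δ ≤ 1) :
    ∃ C > (0:ℝ), ∀ u : P2 → ℝ,
      (∀ μ, |u μ| ≤ 1) →
      (∀ μ ν : P2, |u μ - u ν| ≤ dTV μ.1 ν.1 ^ δ) →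
      ∀ ε : ℝ, 0 < ε →
        ∃ uε : P2 → ℝ,
          (∀ μ, |uε μ - u μ| ≤ C * ε ^ (δ / (2 - δ))) ∧
          (∀ μ ν : P2, |uε μ - uε ν| ≤ C * ε ^ ((δ - 1) / (2 - δ)) * dTV μ.1 ν.1) ∧
          (∀ μ ν : P2, |uε μ - uε ν| ≤ C * dTV μ.1 ν.1 ^ δ) := by
  refine ⟨3, by norm_num, fun u _ hu ε hε => ?_⟩
  have ht : 0 < ε ^ (1 / (2 - δ)) := Real.rpow_pos_of_pos hε _
  have hpow (a : ℝ) : (ε ^ (1 / (2 - δ))) ^ a = ε ^ (a / (2 - δ)) := by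
    rw [← Real.rpow_mul hε.le, one_div_mul_eq_div]
  obtain ⟨v, hvu, hlip, hhol⟩ := exists_lipschitz_approx_of_holder hδ0.le hδ1 hu ht
  rw [hpow] at hvu hlip
  refine ⟨v, fun μ => ?_, fun μ ν => ?_, hhol⟩
  · linarith [hvu μ, Real.rpow_nonneg hε.le (δ / (2 - δ))]
  · have := mul_nonneg (Real.rpow_nonneg hε.le ((δ - 1) / (2 - δ))) (dist_nonneg (x := μ) (y := ν))
    rw [mul_assoc, ← P2.dist_eq]
    linarith [hlip μ ν]
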